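/- Let u be an aperiodic sequence over a finite alphabet A. Then there exist a sequence x : ℕ → A and two distinct letters a, b ∈ A such that for every n ∈ ℕ, writing f = x(0)x(1)⋯x(n−1) for the prefix of x of length n, both words af and bf occur infinitely many times in u. -/

import Mathlib

namespace ReflPaper

variable {A : Type*}

/-- The factor of `u` of length `n` at position `i`: `u(i) u(i+1) ⋯ u(i+n-1)`. -/
def factorAt (u : ℕ → A) (n i : ℕ) : List A :=
  (List.range n).map (fun k => u (i + k))

/-- The word `w` occurs in the sequence `u` at position `i`. -/
def OccursAt (u : ℕ → A) (w : List A) (i : ℕ) : Prop :=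
  w = factorAt u w.length i

/-- The language of `u`: the set of all factors of `u`. -/
def Lang (u : ℕ → A) : Set (List A) := {w | ∃ i, OccursAt u w i}

/-- The set of factors of `u` of length `n`. -/
def LangN (u : ℕ → A) (n : ℕ) : Set (List A) := {w | w.length = n ∧ w ∈ Lang u}

/-- The word `w` occurs infinitely many times in `u`. -/
def OccursInf (u : ℕ → A) (w : List A) : Prop := {i | OccursAt u w i}.Infinite

/-- `u` is eventually periodic. -/
def EventuallyPeriodic (u : ℕ → A) : Prop :=
  ∃ N p : ℕ, 1 ≤ p ∧ ∀ i, N ≤ i → u (i + p) = u i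

/-- Two words are reflectively equivalent if one equals the other or its reversal. -/
def ReflEquiv (w v : List A) : Prop := w = v ∨ w = v.reverse

/-- Reflective equivalence as a setoid on words. -/
def reflSetoid (A : Type*) : Setoid (List A) where
  r := ReflEquiv
  iseqv := by
    constructor
    · intro w; exact Or.inl rfl
    · intro w v h
      rcases h with h | h
      · exact Or.inl h.symm
      · subst h; simp [ReflEquiv]
    · intro w v x h1 h2
      rcases h1 with h1 | h1 <;> rcases h2 with h2 | h2 <;> subst h1 <;>
        simp [ReflEquiv, h2]

/-- The number of reflective-equivalence classes of words in a set `S`. -/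
noncomputable def nClasses (S : Set (List A)) : ℕ :=
  Set.ncard (Quotient.mk (reflSetoid A) '' S)

/-- The reflection complexity `r_u(n)`. -/
noncomputable def reflComplexity (u : ℕ → A) (n : ℕ) : ℕ := nClasses (LangN u n)

/-- The factor complexity `C_u(n) = #L_n(u)`. -/
noncomputable def factorComplexity (u : ℕ → A) (n : ℕ) : ℕ := (LangN u n).ncard

/-- The palindromic complexity `P_u(n)`. -/
noncomputable def palComplexity (u : ℕ → A) (n : ℕ) : ℕ :=
  Set.ncard {w ∈ LangN u n | w.reverse = w}

/-- Both-sided extensions of `w` in the language of `u`. -/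
def Bext (u : ℕ → A) (w : List A) : Set (List A) :=
  {x ∈ Lang u | ∃ a b : A, x = a :: (w ++ [b])}

/-- Right extensions of `w` in the language of `u`. -/
def Rext (u : ℕ → A) (w : List A) : Set (List A) :=
  {x ∈ Lang u | ∃ a : A, x = w ++ [a]}

/-- `T(w)`: the number of reflective-equivalence classes of `Bext(w) ∪ Bext(w̄)`. -/
noncomputable def TT (u : ℕ → A) (w : List A) : ℕ :=
  nClasses (Bext u w ∪ Bext u w.reverse)

/-- `w` is a right special factor of `u`. -/
def RightSpecial (u : ℕ → A) (w : List A) : Prop :=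
  ∃ a b : A, a ≠ b ∧ w ++ [a] ∈ Lang u ∧ w ++ [b] ∈ Lang u

/-- `w` is a left special factor of `u`. -/
def LeftSpecial (u : ℕ → A) (w : List A) : Prop :=
  ∃ a b : A, a ≠ b ∧ a :: w ∈ Lang u ∧ b :: w ∈ Lang u

/-- `u` is Sturmian: `C_u(n) = n + 1` for all `n`. -/
def Sturmian (u : ℕ → A) : Prop := ∀ n, factorComplexity u n = n + 1

/-- `u` is quasi-Sturmian: `C_u(n) = n + c` eventually. -/
def QuasiSturmian (u : ℕ → A) : Prop :=
  ∃ n₀ c : ℕ, ∀ n, n₀ ≤ n → factorComplexity u n = n + c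


/-!
Call a word recurrent if it occurs infinitely often in `u`. Suppose that for some `n` no
recurrent word `w` of length `n` has two recurrent left extensions `a w`, `b w` with `a ≠ b`.
Then deleting the first letter is injective on the recurrent words of length `n + 1`, while
deleting the last letter maps them onto the recurrent words of length `n`; counting shows that
the latter map is injective as well. So, far enough along `u`, each factor of length `n`
determines the next letter, and `u` is eventually periodic. Hence for an aperiodic `u` such
`w, a, b` exist for every length; one pair `a ≠ b` occurs for infinitely many lengths and then,
by taking prefixes, for all of them. The words `v` with `a v` and `b v` recurrent form a
prefix-closed, finitely branching tree with nodes at every depth, and Kőnig's lemma gives the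
infinite branch `x`.
-/

section Words

variable (u : ℕ → A)

@[simp]
lemma length_factorAt (n i : ℕ) : (factorAt u n i).length = n := by
  simp [factorAt]

lemma occursAt_factorAt (n i : ℕ) : OccursAt u (factorAt u n i) i := by
  simp [OccursAt]

lemma factorAt_succ (n i : ℕ) : factorAt u (n + 1) i = u i :: factorAt u n (i + 1) := by
  simp [factorAt, List.range_succ_eq_map, Nat.add_assoc, Nat.add_comm 1]

lemma factorAt_succ' (n i : ℕ) : factorAt u (n + 1) i = factorAt u n i ++ [u (i + n)] := by
  simp [factorAt, List.range_succ]

lemma getElem_factorAt (n i k : ℕ) (hk : k < (factorAt u n i).length) :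
    (factorAt u n i)[k] = u (i + k) := by
  simp [factorAt]

variable {u}

lemma occursAt_iff_getElem {w : List A} {i : ℕ} :
    OccursAt u w i ↔ ∀ k (hk : k < w.length), w[k] = u (i + k) := by
  simp [OccursAt, List.ext_getElem_iff, getElem_factorAt]

lemma occursAt_cons_iff {a : A} {w : List A} {i : ℕ} :
    OccursAt u (a :: w) i ↔ u i = a ∧ OccursAt u w (i + 1) := by
  rw [OccursAt, List.length_cons, factorAt_succ, List.cons_eq_cons, eq_comm]
  rfl

lemma occursAt_append_singleton_iff {w : List A} {c : A} {i : ℕ} :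
    OccursAt u (w ++ [c]) i ↔ OccursAt u w i ∧ u (i + w.length) = c := by
  rw [OccursAt, List.length_append, List.length_singleton, factorAt_succ',
    List.append_singleton_inj, eq_comm (a := c)]
  rfl

lemma OccursAt.of_prefix {v w : List A} {i : ℕ} (h : OccursAt u w i) (hvw : v <+: w) :
    OccursAt u v i :=
  occursAt_iff_getElem.2 fun k hk => by
    rw [hvw.getElem hk]
    exact occursAt_iff_getElem.1 h k _

lemma OccursInf.of_prefix {v w : List A} (h : OccursInf u w) (hvw : v <+: w) : OccursInf u v :=
  h.mono fun _ hi => OccursAt.of_prefix hi hvw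

lemma OccursInf.of_cons {a : A} {w : List A} (h : OccursInf u (a :: w)) : OccursInf u w := by
  refine (h.image (Nat.succ_injective.injOn)).mono ?_
  rintro _ ⟨i, hi, rfl⟩
  exact (occursAt_cons_iff.1 hi).2

variable [Finite A]

lemma OccursInf.exists_append_singleton {w : List A} (h : OccursInf u w) :
    ∃ c, OccursInf u (w ++ [c]) := by
  by_contra! hfin
  refine h ((Set.finite_iUnion fun c => Set.not_infinite.1 (hfin c)).subset fun i hi => ?_)
  exact Set.mem_iUnion.2 ⟨u (i + w.length), occursAt_append_singleton_iff.2 ⟨hi, rfl⟩⟩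

variable (u)

lemma eventually_occursInf_factorAt (n : ℕ) :
    ∀ᶠ i in Filter.atTop, OccursInf u (factorAt u n i) := by
  have hfin : {i | ¬ OccursInf u (factorAt u n i)}.Finite := by
    have hbad : {w : List A | w.length = n ∧ ¬ OccursInf u w}.Finite :=
      (List.finite_length_eq A n).subset fun _ hw => hw.1
    refine (hbad.biUnion fun w hw => Set.not_infinite.1 hw.2).subset fun i hi => ?_
    exact Set.mem_biUnion ⟨length_factorAt u n i, hi⟩ (occursAt_factorAt u n i)
  rw [← Nat.cofinite_eq_atTop]
  simpa using hfin.eventually_cofinite_notMem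

end Words

lemma eventuallyPeriodic_of_factorAt_determines_next [Finite A] {u : ℕ → A} {n N : ℕ}
    (hdet : ∀ k l, N ≤ k → N ≤ l → factorAt u n k = factorAt u n l → u (k + n) = u (l + n)) :
    EventuallyPeriodic u := by
  have hshift : ∀ k l, N ≤ k → N ≤ l → factorAt u n k = factorAt u n l →
      u k = u l ∧ factorAt u n (k + 1) = factorAt u n (l + 1) := by
    intro k l hk hl hkl
    rw [← List.cons_eq_cons, ← factorAt_succ, ← factorAt_succ, factorAt_succ', factorAt_succ',
      hkl, hdet k l hk hl hkl]
  obtain ⟨i, hi : N ≤ i, j, hj : N ≤ j, hij, hfac⟩ :=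
    (Set.Ici_infinite N).exists_lt_map_eq_of_mapsTo (fun k _ => length_factorAt u n k)
      (List.finite_length_eq A n)
  have hsync (m : ℕ) : factorAt u n (i + m) = factorAt u n (j + m) := by
    induction m with
    | zero => exact hfac
    | succ m ih => exact (hshift _ _ (by omega) (by omega) ih).2
  refine ⟨i, j - i, by omega, fun k hk => ?_⟩
  obtain ⟨m, rfl⟩ := Nat.exists_eq_add_of_le hk
  rw [show i + m + (j - i) = j + m by omega]
  exact (hshift _ _ (by omega) (by omega) (hsync m)).1.symm

section RecurrentWords

variable (u : ℕ → A)

def recurrentWords (n : ℕ) : Set (List A) := {w | w.length = n ∧ OccursInf u w}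

lemma finite_recurrentWords [Finite A] (n : ℕ) : (recurrentWords u n).Finite :=
  (List.finite_length_eq A n).subset fun _ hw => hw.1

variable {u} [Finite A]

lemma injOn_dropLast_recurrentWords {n : ℕ}
    (hleft : ∀ w a b, w.length = n → OccursInf u (a :: w) → OccursInf u (b :: w) → a = b) :
    Set.InjOn List.dropLast (recurrentWords u (n + 1)) := by
  have htail : (recurrentWords u (n + 1)).ncard ≤ (recurrentWords u n).ncard := by
    refine Set.ncard_le_ncard_of_injOn List.tail ?_ ?_ (finite_recurrentWords u n)
    · rintro (_ | ⟨a, w⟩) ⟨hw, hocc⟩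
      · simp at hw
      · exact ⟨by simpa using hw, hocc.of_cons⟩
    · rintro (_ | ⟨a, w⟩) ⟨hw, hocc⟩ (_ | ⟨b, w'⟩) ⟨hw', hocc'⟩ htail
      · rfl
      · simp at hw
      · simp at hw'
      · obtain rfl : w = w' := htail
        rw [hleft w a b (by simpa using hw) hocc hocc']
  have hdrop : recurrentWords u n ⊆ List.dropLast '' recurrentWords u (n + 1) := by
    rintro w ⟨hw, hocc⟩
    obtain ⟨c, hc⟩ := hocc.exists_append_singleton
    exact ⟨w ++ [c], ⟨by simp [hw], hc⟩, List.dropLast_concat⟩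
  refine Set.injOn_of_ncard_image_eq (le_antisymm (Set.ncard_image_le
    (finite_recurrentWords u _)) ?_) (finite_recurrentWords u _)
  exact htail.trans (Set.ncard_le_ncard hdrop ((finite_recurrentWords u _).image _))

lemma eventuallyPeriodic_of_forall_occursInf_cons_eq (n : ℕ)
    (hleft : ∀ w a b, w.length = n → OccursInf u (a :: w) → OccursInf u (b :: w) → a = b) :
    EventuallyPeriodic u := by
  obtain ⟨N, hN⟩ := Filter.eventually_atTop.1 (eventually_occursInf_factorAt u (n + 1))
  refine eventuallyPeriodic_of_factorAt_determines_next (n := n) (N := N) fun k l hk hl hkl => ?_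
  have hk := hN k hk
  have hl := hN l hl
  rw [factorAt_succ'] at hk hl
  rw [hkl] at hk
  simpa using injOn_dropLast_recurrentWords hleft ⟨by simp, hk⟩ ⟨by simp, hl⟩ (by simp)

lemma exists_ne_occursInf_cons (hu : ¬ EventuallyPeriodic u) (n : ℕ) :
    ∃ w a b, w.length = n ∧ a ≠ b ∧ OccursInf u (a :: w) ∧ OccursInf u (b :: w) := by
  by_contra! h
  refine hu (eventuallyPeriodic_of_forall_occursInf_cons_eq n fun w a b hw ha hb => ?_)
  by_contra hab
  exact h w a b hw hab ha hb

lemma exists_ne_forall_length_occursInf_cons (hu : ¬ EventuallyPeriodic u) :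
    ∃ a b : A, a ≠ b ∧
      ∀ n, ∃ v : List A, v.length = n ∧ OccursInf u (a :: v) ∧ OccursInf u (b :: v) := by
  choose w a b hw hab ha hb using exists_ne_occursInf_cons hu
  obtain ⟨⟨a₀, b₀⟩, hp⟩ := Finite.exists_infinite_fiber fun n => (a n, b n)
  have hp := Set.infinite_coe_iff.1 hp
  obtain ⟨m₀, hm₀ : (a m₀, b m₀) = (a₀, b₀)⟩ := hp.nonempty
  obtain ⟨rfl, rfl⟩ := Prod.mk.inj hm₀
  refine ⟨a m₀, b m₀, hab m₀, fun n => ?_⟩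
  obtain ⟨m, hm : (a m, b m) = (a m₀, b m₀), hnm⟩ := hp.exists_gt n
  obtain ⟨ham, hbm⟩ := Prod.mk.inj hm
  have hpre (c : A) : c :: (w m).take n <+: c :: w m :=
    (List.prefix_cons_inj c).2 (List.take_prefix n (w m))
  exact ⟨(w m).take n, by simp [hw m]; omega, (ham ▸ ha m).of_prefix (hpre _),
    (hbm ▸ hb m).of_prefix (hpre _)⟩

end RecurrentWords

lemma exists_seq_forall_factorAt_mem [Finite A] {T : Set (List A)}
    (hT : ∀ ⦃v w⦄, v <+: w → w ∈ T → v ∈ T) (hlen : ∀ n, ∃ v ∈ T, v.length = n) :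
    ∃ x : ℕ → A, ∀ n, factorAt x n 0 ∈ T := by
  let α : ℕ → Type _ := fun i => {v : List A // v ∈ T ∧ v.length = i}
  have (i : ℕ) : Finite (α i) :=
    ((List.finite_length_eq A i).subset fun _ hv => hv.2).to_subtype
  have (i : ℕ) : Nonempty (α i) := let ⟨v, hv⟩ := hlen i; ⟨⟨v, hv⟩⟩
  obtain ⟨f, hf⟩ := exists_seq_forall_proj_of_forall_finite (α := α)
    (fun {i _} hij v => ⟨v.1.take i, hT (List.take_prefix i v.1) v.2.1, by simp [v.2.2, hij]⟩)
    (fun _ v => Subtype.ext (List.take_of_length_le v.2.2.le))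
    (fun _ _ _ hij _ _ => Subtype.ext (by simp [List.take_take, hij]))
    (fun _ _ => Set.toFinite _)
  have hlenf (i : ℕ) : (f i).1.length = i := (f i).2.2
  refine ⟨fun k => (f (k + 1)).1[k]'(by simp [hlenf]), fun n => ?_⟩
  suffices factorAt _ n 0 = (f n).1 from this ▸ (f n).2.1
  refine List.ext_getElem (by simp [hlenf]) fun k hk _ => ?_
  simp only [length_factorAt] at hk
  have htake : (f n).1.take (k + 1) = (f (k + 1)).1 := congrArg Subtype.val (hf (by omega))
  have hpre : (f (k + 1)).1 <+: (f n).1 := htake ▸ List.take_prefix _ _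
  rw [getElem_factorAt, Nat.zero_add]
  exact hpre.getElem (by simp [hlenf])

/-- for an aperiodic `u` there is a right-sided sequence `x` and two
distinct letters `a, b` such that `a·(prefix of x)` and `b·(prefix of x)` occur
infinitely many times in `u`, for every prefix of `x`. -/
theorem stmt6 {A : Type*} [Fintype A] (u : ℕ → A) (hu : ¬ EventuallyPeriodic u) :
    ∃ (x : ℕ → A) (a b : A), a ≠ b ∧
      ∀ n : ℕ, OccursInf u (a :: factorAt x n 0) ∧ OccursInf u (b :: factorAt x n 0) := by
  obtain ⟨a, b, hab, hlen⟩ := exists_ne_forall_length_occursInf_cons hu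
  obtain ⟨x, hx⟩ := exists_seq_forall_factorAt_mem
    (T := {v | OccursInf u (a :: v) ∧ OccursInf u (b :: v)})
    (fun _ _ hvw hw => ⟨hw.1.of_prefix ((List.prefix_cons_inj a).2 hvw),
      hw.2.of_prefix ((List.prefix_cons_inj b).2 hvw)⟩)
    fun n => (hlen n).imp fun _ hv => ⟨hv.2, hv.1⟩
  exact ⟨x, a, b, hab, hx⟩

end ReflPaper
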